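/- arXiv:1605.00663 — 5 statements merged into one kernel-verified Lean document; each statement's English description precedes it below -/
import Mathlib

section
/- For every positive integer k, the Möbius function satisfies μ(k) = Σ_{F ∈ Γ(k)} (-1)^{|F|}, where Γ(k) is the collection of finite sets F with {0,k} ⊆ F ⊆ {0,1,...,k} and gcd of the elements of F equal to 1. -/
open Finset ArithmeticFunction
open scoped ArithmeticFunction.Moebius

/-!
Write the indicator of `gcd F = 1` as `∑ d ∣ gcd F, μ d` and exchange the sums. Every `F ∈ Γ(k)`
contains `k`, so only divisors `d ∣ k` occur, and the sets `F` with `{0, k} ⊆ F ⊆ [0, k]` consisting of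
multiples of `d` form the interval from `{0, k}` to the multiples of `d` in `[0, k]` in the subset
lattice. Its alternating sum vanishes unless the interval is a single point, i.e. unless `d = k`, so
only `μ k` survives.
-/

theorem sum_divisors_moebius_eq_ite {R : Type*} [Ring R] (n : ℕ) :
    ∑ d ∈ n.divisors, (μ d : R) = if n = 1 then 1 else 0 := by
  have h := congrArg (· n) (coe_moebius_mul_coe_zeta (R := R))
  simp only [coe_mul_zeta_apply, intCoe_apply, one_apply] at h
  exact h

theorem sum_Icc_neg_one_pow_card {α : Type*} [DecidableEq α] (s t : Finset α) :
    ∑ u ∈ Icc s t, (-1 : ℤ) ^ u.card = if s = t then (-1) ^ s.card else 0 := by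
  by_cases hst : s ⊆ t
  · have hdisj {a} (ha : a ∈ (t \ s).powerset) : Disjoint s a :=
      disjoint_of_subset_right (mem_powerset.mp ha) disjoint_sdiff
    have hinj : Set.InjOn (s ∪ ·) (t \ s).powerset := fun a ha b hb hab => by
      rw [← union_sdiff_cancel_left (hdisj ha), ← union_sdiff_cancel_left (hdisj hb)]
      exact congrArg (· \ s) hab
    rw [Icc_eq_image_powerset hst, sum_image hinj]
    calc ∑ a ∈ (t \ s).powerset, (-1 : ℤ) ^ (s ∪ a).card
        = (-1) ^ s.card * ∑ a ∈ (t \ s).powerset, (-1 : ℤ) ^ a.card := by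
          rw [mul_sum]
          exact sum_congr rfl fun a ha => by rw [card_union_of_disjoint (hdisj ha), pow_add]
      _ = if s = t then (-1) ^ s.card else 0 := by
          have hst' : s = t ↔ t ⊆ s := ⟨fun h => h ▸ subset_rfl, hst.antisymm⟩
          simp only [sum_powerset_neg_one_pow_card, sdiff_eq_empty_iff_subset, hst', mul_ite,
            mul_one, mul_zero]
  · rw [Icc_eq_empty (fun h => hst h), sum_empty, if_neg (fun h => hst h.le)]

theorem sum_filter_eq_one_eq_sum_moebius_mul {ι R : Type*} [CommRing R] (s : Finset ι)
    (g : ι → ℕ) (w : ι → R) {n : ℕ} (hn : n ≠ 0) (hg : ∀ i ∈ s, g i ∣ n) :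
    ∑ i ∈ s with g i = 1, w i = ∑ d ∈ n.divisors, (μ d : R) * ∑ i ∈ s with d ∣ g i, w i := by
  calc ∑ i ∈ s with g i = 1, w i
      = ∑ i ∈ s, (∑ d ∈ (g i).divisors, (μ d : R)) * w i := by
        simp only [sum_filter, sum_divisors_moebius_eq_ite, ite_mul, one_mul, zero_mul]
    _ = ∑ i ∈ s, ∑ d ∈ n.divisors, if d ∣ g i then (μ d : R) * w i else 0 := by
        refine sum_congr rfl fun i hi => ?_
        rw [← Nat.divisors_filter_dvd_of_dvd hn (hg i hi), sum_mul, sum_filter]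
    _ = ∑ d ∈ n.divisors, (μ d : R) * ∑ i ∈ s with d ∣ g i, w i := by
        rw [sum_comm]
        simp only [sum_filter, mul_sum, mul_ite, mul_zero]

theorem filter_forall_mem_Icc {α : Type*} [DecidableEq α] (p : α → Prop) [DecidablePred p]
    (s t : Finset α) : {u ∈ Icc s t | ∀ x ∈ u, p x} = Icc s {x ∈ t | p x} := by
  ext u
  simp only [mem_filter, mem_Icc, subset_iff]
  constructor
  · rintro ⟨⟨hsu, hut⟩, hp⟩
    exact ⟨hsu, fun x hx => ⟨hut hx, hp x hx⟩⟩
  · rintro ⟨hsu, hut⟩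
    exact ⟨⟨hsu, fun x hx => (hut hx).1⟩, fun x hx => (hut hx).2⟩

theorem pair_zero_eq_filter_dvd_iff {d k : ℕ} (hk : 0 < k) (hd : d ∣ k) :
    {0, k} = {x ∈ range (k + 1) | d ∣ x} ↔ d = k := by
  constructor
  · intro h
    have hdmem : d ∈ ({0, k} : Finset ℕ) := by
      rw [h, mem_filter, mem_range]
      exact ⟨Nat.lt_succ_of_le (Nat.le_of_dvd hk hd), dvd_rfl⟩
    rcases mem_insert.mp hdmem with rfl | hdk
    · exact absurd (zero_dvd_iff.mp hd) hk.ne'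
    · exact mem_singleton.mp hdk
  · rintro rfl
    ext x
    simp only [mem_insert, mem_singleton, mem_filter, mem_range]
    constructor
    · rintro (rfl | rfl) <;> simp
    · rintro ⟨hxk, hdx⟩
      rcases (Nat.lt_succ_iff.mp hxk).lt_or_eq with hlt | rfl
      · exact Or.inl (Nat.eq_zero_of_dvd_of_lt hdx hlt)
      · exact Or.inr rfl

theorem sum_Icc_pair_zero_filter_dvd_gcd {d k : ℕ} (hk : 0 < k) (hd : d ∣ k) :
    ∑ F ∈ Icc {0, k} (range (k + 1)) with d ∣ F.gcd id, (-1 : ℤ) ^ F.card =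
      if d = k then 1 else 0 := by
  simp_rw [Finset.dvd_gcd_iff, id, filter_forall_mem_Icc, sum_Icc_neg_one_pow_card,
    pair_zero_eq_filter_dvd_iff hk hd, card_pair hk.ne, even_two.neg_one_pow]

/-- μ(k) = Σ_{F ∈ Γ(k)} (-1)^{|F|}. -/
theorem moebius_eq_sum_gamma (k : ℕ) (hk : 0 < k) :
    ArithmeticFunction.moebius k =
      ∑ F ∈ (Finset.range (k + 1)).powerset.filter
          (fun F => 0 ∈ F ∧ k ∈ F ∧ F.gcd id = 1),
        (-1 : ℤ) ^ F.card := by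
  have hΓ : (range (k + 1)).powerset.filter (fun F => 0 ∈ F ∧ k ∈ F ∧ F.gcd id = 1) =
      {F ∈ Icc {0, k} (range (k + 1)) | F.gcd id = 1} := by
    ext F
    simp only [mem_filter, mem_powerset, mem_Icc, insert_subset_iff, singleton_subset_iff]
    tauto
  have hgcd_dvd (F) (hF : F ∈ Icc {0, k} (range (k + 1))) : F.gcd id ∣ k :=
    gcd_dvd (singleton_subset_iff.mp (insert_subset_iff.mp (mem_Icc.mp hF).1).2)
  rw [hΓ, sum_filter_eq_one_eq_sum_moebius_mul _ _ _ hk.ne' hgcd_dvd]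
  rw [sum_congr rfl fun d hd => by
    rw [sum_Icc_pair_zero_filter_dvd_gcd hk (Nat.dvd_of_mem_divisors hd)]]
  simp [hk.ne']
end

section
/- Let k be a positive integer that is not squarefree, and let s be the product of the distinct primes dividing k (the radical of k). Then s < k, and for every F ∈ Γ(k), the symmetric difference F △ {s} also belongs to Γ(k). -/
/-!
The radical `s` of `k` is squarefree, so `s ≠ k`, and `s ∣ k`, so `s < k`. Toggling `s` leaves
`0` and `k` in place. Adding `s` cannot raise the gcd. If `s` is removed, the gcd `g` of what is
left divides `k` and is coprime to `s` (since `gcd s g = gcd F = 1`); as `k` divides a power of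
`s`, `g` is coprime to `k`, hence `g = 1`.
-/

open UniqueFactorizationMonoid

namespace Nat

lemma radical_lt_self_of_not_squarefree {n : ℕ} (hn : n ≠ 0) (h : ¬Squarefree n) :
    radical n < n :=
  (radical_le_self_iff.2 hn).lt_of_ne fun h' => h (h' ▸ squarefree_radical)

end Nat

namespace Finset

section SymmDiff

variable {α : Type*} [DecidableEq α] {s : Finset α} {a : α}

lemma symmDiff_singleton_of_mem (h : a ∈ s) : symmDiff s {a} = s.erase a := by
  ext x
  by_cases hx : x = a <;> simp [mem_symmDiff, hx, h]

lemma symmDiff_singleton_of_notMem (h : a ∉ s) : symmDiff s {a} = insert a s := by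
  ext x
  by_cases hx : x = a <;> simp [mem_symmDiff, hx, h]

end SymmDiff

section Gcd

variable {F : Finset ℕ} {a b n : ℕ}

lemma gcd_erase_eq_one (hF : F.gcd id = 1) (hb : b ∈ F) (hba : b ≠ a) (hdvd : b ∣ a ^ n) :
    (F.erase a).gcd id = 1 := by
  set g := (F.erase a).gcd id
  have hga : Nat.Coprime a g := by
    have h := gcd_mono (f := id) (insert_erase_subset a F)
    rw [gcd_insert, hF] at h
    exact Nat.dvd_one.1 h
  have hgb : g ∣ b := gcd_dvd (mem_erase.2 ⟨hba, hb⟩)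
  exact Nat.Coprime.eq_one_of_dvd ((hga.symm.pow_right n).coprime_dvd_right hdvd) hgb

lemma gcd_symmDiff_singleton_eq_one (hF : F.gcd id = 1) (hb : b ∈ F) (hba : b ≠ a)
    (hdvd : b ∣ a ^ n) : (symmDiff F {a}).gcd id = 1 := by
  by_cases ha : a ∈ F
  · rw [symmDiff_singleton_of_mem ha]
    exact gcd_erase_eq_one hF hb hba hdvd
  · rw [symmDiff_singleton_of_notMem ha, gcd_insert, hF, id, gcd_one_right]

end Gcd

end Finset

/-- for non-squarefree k with radical s, s < k and Γ(k) is closed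
under symmetric difference with {s}. -/
theorem gamma_symmDiff_radical (k : ℕ) (hk : 0 < k) (hns : ¬ Squarefree k)
    (s : ℕ) (hs : s = ∏ p ∈ k.primeFactors, p) :
    s < k ∧
      ∀ F : Finset ℕ, F ⊆ Finset.range (k + 1) → 0 ∈ F → k ∈ F → F.gcd id = 1 →
        (symmDiff F {s} ⊆ Finset.range (k + 1) ∧ 0 ∈ symmDiff F {s} ∧
          k ∈ symmDiff F {s} ∧ (symmDiff F {s}).gcd id = 1) := by
  rw [← Nat.radical_eq_prod_primeFactors] at hs
  subst hs
  have hlt : radical k < k := Nat.radical_lt_self_of_not_squarefree hk.ne' hns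
  obtain ⟨n, hn⟩ := exists_dvd_radical_self_pow hk.ne'
  refine ⟨hlt, fun F hF h0 hkF hgcd =>
    ⟨?_, ?_, ?_, Finset.gcd_symmDiff_singleton_eq_one hgcd hkF hlt.ne' hn⟩⟩
  · exact Finset.symmDiff_subset_union.trans
      (Finset.union_subset hF (Finset.singleton_subset_iff.2 (Finset.mem_range.2 (by omega))))
  · simp [Finset.mem_symmDiff, h0, (Nat.radical_pos k).ne]
  · simp [Finset.mem_symmDiff, hkF, hlt.ne']
end

section
/- Let F be a face of vdW(n,k) with max(F) − min(F) ≥ 2, let x = min(F), y = max(F), d = gcdtr(F). Then d ∈ D(n,k,x,y) and the set {(f − x)/d : f ∈ F} belongs to Γ((y−x)/d). -/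
/-- `F` is a face of the van der Waerden complex `vdW(n,k)`. -/
def vdWFace (n k : ℕ) (F : Finset ℕ) : Prop :=
  ∃ x d : ℕ, 1 ≤ x ∧ 1 ≤ d ∧ x + k * d ≤ n ∧
    F ⊆ (Finset.range (k + 1)).image (fun i => x + i * d)

/-- `d ∈ D(n,k,x,y)`. -/
def memD (n k x y d : ℕ) : Prop :=
  1 ≤ d ∧ d ∣ y - x ∧
    vdWFace n k ((Finset.range ((y - x) / d + 1)).image (fun i => x + i * d))

/-!
Let `F` lie in the progression `x₀, x₀ + d₀, …, x₀ + k d₀`. Every difference of two terms is a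
multiple of `d₀`, so `d₀ ∣ d = gcd {f - x}`; hence the progression from `x` to `y` with step `d`
stays inside the ambient one and is again a face. Dividing the differences `f - x` by their gcd
leaves a set of gcd `1` containing `0` and `(y - x) / d`.
-/

def arithProg (x₀ d₀ k : ℕ) : Finset ℕ :=
  (Finset.range (k + 1)).image (fun i => x₀ + i * d₀)

section arithProg

variable {x₀ d₀ k : ℕ}

theorem dvd_sub_of_mem_arithProg {a b : ℕ} (ha : a ∈ arithProg x₀ d₀ k)
    (hb : b ∈ arithProg x₀ d₀ k) : d₀ ∣ b - a := by
  obtain ⟨i, -, rfl⟩ := Finset.mem_image.mp ha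
  obtain ⟨j, -, rfl⟩ := Finset.mem_image.mp hb
  exact ⟨j - i, by rw [Nat.mul_sub, mul_comm d₀ j, mul_comm d₀ i]; omega⟩

theorem mem_arithProg_of_dvd_sub {x y z : ℕ} (hd₀ : 0 < d₀) (hx : x ∈ arithProg x₀ d₀ k)
    (hy : y ∈ arithProg x₀ d₀ k) (hxz : x ≤ z) (hzy : z ≤ y) (hdvd : d₀ ∣ z - x) :
    z ∈ arithProg x₀ d₀ k := by
  obtain ⟨a, -, rfl⟩ := Finset.mem_image.mp hx
  obtain ⟨b, hb, rfl⟩ := Finset.mem_image.mp hy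
  obtain ⟨m, hm⟩ := hdvd
  have hz : z = x₀ + (a + m) * d₀ := by rw [Nat.add_mul]; linarith [Nat.sub_add_cancel hxz]
  have hab : a + m ≤ b := Nat.le_of_mul_le_mul_right (by omega) hd₀
  exact Finset.mem_image.mpr ⟨a + m, by simp only [Finset.mem_range] at hb ⊢; omega, hz.symm⟩

end arithProg

theorem vdWFace.arithProg_gcd_sub {n k x y : ℕ} {F : Finset ℕ} (hF : vdWFace n k F)
    (hx : x ∈ F) (hy : y ∈ F) (hxy : x ≤ y) :
    vdWFace n k (arithProg x (F.gcd (· - x)) ((y - x) / F.gcd (· - x))) := by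
  obtain ⟨x₀, d₀, hx₀, hd₀, hkn, hsub⟩ := hF
  refine ⟨x₀, d₀, hx₀, hd₀, hkn, fun z hz => ?_⟩
  obtain ⟨i, hi, rfl⟩ := Finset.mem_image.mp hz
  have hstep : d₀ ∣ F.gcd (· - x) :=
    Finset.dvd_gcd fun f hf => dvd_sub_of_mem_arithProg (hsub hx) (hsub hf)
  have hiy : i * F.gcd (· - x) ≤ y - x :=
    Nat.mul_le_of_le_div _ _ _ (Nat.lt_succ_iff.mp (Finset.mem_range.mp hi))
  exact mem_arithProg_of_dvd_sub hd₀ (hsub hx) (hsub hy) (Nat.le_add_right _ _) (by omega)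
    (by simpa using hstep.mul_left i)

/-- for a face F with max F − min F ≥ 2, x = min F, y = max F,
d = gcdtr F, we have d ∈ D(n,k,x,y) and {(f−x)/d : f ∈ F} ∈ Γ((y−x)/d). -/
theorem face_decomposition (n k : ℕ) (F : Finset ℕ) (hF : vdWFace n k F)
    (hne : F.Nonempty) (hspread : 2 ≤ F.max' hne - F.min' hne)
    (x y d : ℕ) (hx : x = F.min' hne) (hy : y = F.max' hne)
    (hd : d = F.gcd (fun f => f - F.min' hne)) :
    memD n k x y d ∧
      (F.image (fun f => (f - x) / d) ⊆ Finset.range ((y - x) / d + 1) ∧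
        0 ∈ F.image (fun f => (f - x) / d) ∧
        (y - x) / d ∈ F.image (fun f => (f - x) / d) ∧
        (F.image (fun f => (f - x) / d)).gcd id = 1) := by
  rw [← hx] at hd
  have hxF : x ∈ F := hx ▸ F.min'_mem hne
  have hyF : y ∈ F := hy ▸ F.max'_mem hne
  have hdvd : d ∣ y - x := hd ▸ Finset.gcd_dvd hyF
  refine ⟨⟨Nat.pos_of_dvd_of_pos hdvd (by omega), hdvd, ?_⟩, ?_, ?_, ?_, ?_⟩
  · exact hd ▸ hF.arithProg_gcd_sub hxF hyF (hx ▸ hy ▸ F.min'_le_max' hne)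
  · intro z hz
    obtain ⟨f, hf, rfl⟩ := Finset.mem_image.mp hz
    exact Finset.mem_range_succ_iff.mpr
      (Nat.div_le_div_right (Nat.sub_le_sub_right (hy ▸ F.le_max' f hf) x))
  · exact Finset.mem_image.mpr ⟨x, hxF, by simp⟩
  · exact Finset.mem_image.mpr ⟨y, hyF, rfl⟩
  · rw [Finset.gcd_image, hd]
    exact Finset.gcd_div_eq_one hyF (by omega)
end

section
/- Define L(a) = lcm(1,...,a) and M(a) as the maximum of p^{α−1} over prime powers p^α exactly dividing L(a). Then the function a ↦ L(a)/M(a) is weakly increasing for integers a ≥ 2. -/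
/-!
Since `L a ∣ L b`, write `L b = L a * r`. For every prime `p`, the exponent of `p` in `L b` is
`α + β` with `p^α ∥ L a` and `p^β ∥ r`, so `p^(α + β - 1) ≤ p^β * p^(α - 1) ≤ r * M a`.
Hence `M b ≤ r * M a`, and multiplying by `L a` gives `L a * M b ≤ L b * M a`.
-/

/-- `L a = lcm(1, 2, …, a)`. -/
def vdWL (a : ℕ) : ℕ := (Finset.Icc 1 a).lcm id

/-- `M a` is the maximum of `p^(α−1)` over primes `p` with `p^α` exactly
dividing `L a`. -/
def vdWM (a : ℕ) : ℕ :=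
  ((Finset.range (a + 1)).filter Nat.Prime).sup
    (fun p => p ^ ((vdWL a).factorization p - 1))

theorem Nat.pow_factorization_mul_sub_one_le {n r p : ℕ} (hn : n ≠ 0) (hr : r ≠ 0)
    (hp : p.Prime) :
    p ^ ((n * r).factorization p - 1) ≤ r * p ^ (n.factorization p - 1) := by
  rw [Nat.factorization_mul hn hr, Finsupp.add_apply]
  calc p ^ (n.factorization p + r.factorization p - 1)
      ≤ p ^ (r.factorization p + (n.factorization p - 1)) :=
        Nat.pow_le_pow_right hp.pos (by omega)
    _ = p ^ r.factorization p * p ^ (n.factorization p - 1) := pow_add _ _ _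
    _ ≤ r * p ^ (n.factorization p - 1) :=
        Nat.mul_le_mul_right _ (Nat.le_of_dvd (Nat.pos_of_ne_zero hr) (Nat.ordProj_dvd r p))

theorem vdWL_ne_zero (a : ℕ) : vdWL a ≠ 0 := by
  simp only [vdWL, ne_eq, Finset.lcm_eq_zero_iff, Finset.mem_Icc, id_eq]
  omega

theorem vdWL_dvd_vdWL {a b : ℕ} (hab : a ≤ b) : vdWL a ∣ vdWL b :=
  Finset.lcm_mono (Finset.Icc_subset_Icc le_rfl hab)

theorem vdWL_dvd_factorial (a : ℕ) : vdWL a ∣ a.factorial :=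
  Finset.lcm_dvd fun _ hn => Nat.dvd_factorial (Finset.mem_Icc.mp hn).1 (Finset.mem_Icc.mp hn).2

theorem factorization_vdWL_eq_zero {a p : ℕ} (hp : p.Prime) (hpa : a < p) :
    (vdWL a).factorization p = 0 :=
  Nat.factorization_eq_zero_of_not_dvd fun h =>
    absurd ((hp.dvd_factorial).mp (h.trans (vdWL_dvd_factorial a))) (by omega)

theorem pow_factorization_vdWL_le_vdWM_of_le {a p : ℕ} (hp : p.Prime) (hpa : p ≤ a) :
    p ^ ((vdWL a).factorization p - 1) ≤ vdWM a :=
  Finset.le_sup (f := fun p => p ^ ((vdWL a).factorization p - 1))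
    (Finset.mem_filter.mpr ⟨Finset.mem_range.mpr (Nat.lt_succ_of_le hpa), hp⟩)

theorem one_le_vdWM {a : ℕ} (ha : 2 ≤ a) : 1 ≤ vdWM a :=
  (Nat.one_le_two_pow).trans (pow_factorization_vdWL_le_vdWM_of_le Nat.prime_two ha)

/-- Primes above `a` contribute `p^0 = 1`, which `M a` dominates once `a ≥ 2`. -/
theorem pow_factorization_vdWL_le_vdWM {a p : ℕ} (ha : 2 ≤ a) (hp : p.Prime) :
    p ^ ((vdWL a).factorization p - 1) ≤ vdWM a := by
  rcases le_or_gt p a with hpa | hpa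
  · exact pow_factorization_vdWL_le_vdWM_of_le hp hpa
  · simpa [factorization_vdWL_eq_zero hp hpa] using one_le_vdWM ha

theorem vdWM_le_mul_of_vdWL_eq_mul {a b r : ℕ} (ha : 2 ≤ a) (hr : vdWL b = vdWL a * r) :
    vdWM b ≤ r * vdWM a := by
  have hr0 : r ≠ 0 := right_ne_zero_of_mul (hr ▸ vdWL_ne_zero b)
  refine Finset.sup_le fun p hp => ?_
  have hp : p.Prime := (Finset.mem_filter.mp hp).2
  rw [hr]
  exact (Nat.pow_factorization_mul_sub_one_le (vdWL_ne_zero a) hr0 hp).trans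
    (Nat.mul_le_mul_left r (pow_factorization_vdWL_le_vdWM ha hp))

/-- the quotient L(a)/M(a) is weakly increasing for a ≥ 2
(stated via cross-multiplication, as M(a) > 0). -/
theorem L_div_M_monotone (a b : ℕ) (ha : 2 ≤ a) (hab : a ≤ b) :
    vdWL a * vdWM b ≤ vdWL b * vdWM a := by
  obtain ⟨r, hr⟩ := vdWL_dvd_vdWL hab
  calc vdWL a * vdWM b ≤ vdWL a * (r * vdWM a) :=
        Nat.mul_le_mul_left _ (vdWM_le_mul_of_vdWL_eq_mul ha hr)
    _ = vdWL b * vdWM a := by rw [hr, mul_assoc]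
end

section
/- Let a > 1 and suppose M(a) = p^{α−1} where p^α exactly divides L(a) = lcm(1,...,a) and p^{α−1} is maximal among such prime powers. If a ≥ 4, then p ∈ {2, 3}. -/
/-!
The exponent of a prime `p` in `L a` is `⌊log_p a⌋`. Writing `k = ⌊log_p a⌋` and `j = ⌊log_2 a⌋`,
a prime `p ≥ 5` gives `5 p^(k-1) ≤ p^k ≤ a < 2^(j+1) = 4 · 2^(j-1)`, so `p^(k-1)` is strictly
smaller than the contribution `2^(j-1)` of the prime `2` and cannot be the maximum `M a`.
-/

theorem factorization_vdWL (a : ℕ) {p : ℕ} (hp : p.Prime) :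
    (vdWL a).factorization p = Nat.log p a :=
  Nat.factorization_lcmUpto a hp

theorem pow_factorization_vdWL_sub_one_le_vdWM {a q : ℕ} (hq : q.Prime) (hqa : q ≤ a) :
    q ^ ((vdWL a).factorization q - 1) ≤ vdWM a :=
  Finset.le_sup (f := fun p => p ^ ((vdWL a).factorization p - 1))
    (Finset.mem_filter.2 ⟨Finset.mem_range.2 (Nat.lt_succ_of_le hqa), hq⟩)

theorem pow_log_sub_one_lt_two_pow_log_sub_one {p a : ℕ} (hp : 5 ≤ p) (ha : 4 ≤ a) :
    p ^ (Nat.log p a - 1) < 2 ^ (Nat.log 2 a - 1) := by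
  have hj : 2 ≤ Nat.log 2 a := Nat.le_log_of_pow_le one_lt_two (by omega)
  rcases Nat.eq_zero_or_pos (Nat.log p a) with hk | hk
  · rw [hk, pow_zero]
    exact Nat.one_lt_two_pow (by omega)
  · have hupper : 5 * p ^ (Nat.log p a - 1) < 4 * 2 ^ (Nat.log 2 a - 1) :=
      calc 5 * p ^ (Nat.log p a - 1)
          _ ≤ p * p ^ (Nat.log p a - 1) := Nat.mul_le_mul_right _ hp
          _ = p ^ Nat.log p a := by rw [← pow_succ', Nat.sub_add_cancel hk]
          _ ≤ a := Nat.pow_log_le_self p (by omega)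
          _ < 2 ^ (Nat.log 2 a + 1) := Nat.lt_pow_succ_log_self one_lt_two a
          _ = 4 * 2 ^ (Nat.log 2 a - 1) := by
            rw [show Nat.log 2 a + 1 = 2 + (Nat.log 2 a - 1) by omega, pow_add]; rfl
    omega

theorem M_attained_by_two_or_three_general (a : ℕ) (ha : 4 ≤ a) (p : ℕ) (hp : p.Prime)
    (hM : vdWM a = p ^ ((vdWL a).factorization p - 1)) :
    p = 2 ∨ p = 3 := by
  by_contra! hp23
  have hp5 : 5 ≤ p := hp.five_le_of_ne_two_of_ne_three hp23.1 hp23.2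
  have hM2 := pow_factorization_vdWL_sub_one_le_vdWM (a := a) Nat.prime_two (by omega)
  rw [hM, factorization_vdWL a hp, factorization_vdWL a Nat.prime_two] at hM2
  exact (pow_log_sub_one_lt_two_pow_log_sub_one hp5 ha).not_ge hM2

/-- if a ≥ 4 and the maximum M(a) is attained by the prime p,
i.e. M(a) = p^(α−1) where α is the exponent of p in L(a), then p ∈ {2,3}. -/
theorem M_attained_by_two_or_three (a : ℕ) (ha : 4 ≤ a) (p : ℕ) (hp : p.Prime)
    (hpa : p ≤ a) (hM : vdWM a = p ^ ((vdWL a).factorization p - 1)) :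
    p = 2 ∨ p = 3 :=
  M_attained_by_two_or_three_general a ha p hp hM
end
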